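/- Under Assumption 1, for every P ∈ P(Ξ), every δ > 0 and every r > 0, the closure (in the weak topology on P(Ξ')) of the set {P' ∈ P(Ξ') : I^δ(P', P) > r} is contained in the set {P' ∈ P(Ξ') : I(P', P) > r}. -/
import Mathlib


open MeasureTheory ProbabilityTheory Filter Set
open scoped ENNReal NNReal Topology Classical

noncomputable section

/-- The positive part of an extended real, as an extended nonnegative real. -/
def ePos (x : EReal) : ℝ≥0∞ := if x = ⊤ then ⊤ else ENNReal.ofReal x.toReal

/-- The extended-real-valued integral of an extended-real-valued function. -/
def eInt {α : Type*} [MeasurableSpace α] (μ : Measure α) (f : α → EReal) : EReal :=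
  ((∫⁻ a, ePos (f a) ∂μ : ℝ≥0∞) : EReal) - ((∫⁻ a, ePos (-(f a)) ∂μ : ℝ≥0∞) : EReal)

/-- Kullback-Leibler divergence: `∫ log (dμ/dν) dμ` if `μ ≪ ν`, and `+∞` otherwise. -/
def KLdiv {α : Type*} [MeasurableSpace α] (μ ν : Measure α) : EReal :=
  if μ ≪ ν then eInt μ (fun x => ((Real.log ((μ.rnDeriv ν x).toReal) : ℝ) : EReal)) else ⊤

/-- `exp (−x)` for an extended real `x`, as an extended nonnegative real. -/
def expNeg (x : EReal) : ℝ≥0∞ := if x = ⊤ then 0 else ENNReal.ofReal (Real.exp (-x.toReal))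

/-- The set of couplings (transport plans) on `Ξ × Ξ'` with first marginal `μ` and second
marginal `ν`. -/
def couplings {Ξ Ξ' : Type*} [MeasurableSpace Ξ] [MeasurableSpace Ξ']
    (μ : Measure Ξ) (ν : Measure Ξ') : Set (Measure (Ξ × Ξ')) :=
  {T | IsProbabilityMeasure T ∧ T.map Prod.fst = μ ∧ T.map Prod.snd = ν}

/-- The entropic optimal transport distance `D_W(ν, μ)` with cost `d`, between a measure `ν`
on `Ξ'` and a measure `μ` on `Ξ`. -/
def DW {Ξ Ξ' : Type*} [MeasurableSpace Ξ] [MeasurableSpace Ξ'] (d : Ξ × Ξ' → EReal)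
    (ν : Measure Ξ') (μ : Measure Ξ) : EReal :=
  ⨅ T ∈ couplings μ ν,
    eInt T d + KLdiv T ((T.map Prod.fst).prod (T.map Prod.snd))

/-- The large-deviations rate function
`I(P', P) = inf_Q D_W(P', Q) + D_KL(Q, P) + D_KL(P', m')`. -/
def rateI {Ξ Ξ' : Type*} [MeasurableSpace Ξ] [MeasurableSpace Ξ'] (d : Ξ × Ξ' → EReal)
    (m' : Measure Ξ') (P' : Measure Ξ') (P : Measure Ξ) : EReal :=
  ⨅ Q : {Q : Measure Ξ // IsProbabilityMeasure Q},
    DW d P' Q.1 + KLdiv Q.1 P + KLdiv P' m'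

/-- The observational kernel `O_ξ` of Assumption 1, with density `exp(−d(ξ, ·))` w.r.t. `m'`. -/
def obsKernel {Ξ Ξ' : Type*} [MeasurableSpace Ξ'] (d : Ξ × Ξ' → EReal) (m' : Measure Ξ')
    (ξ : Ξ) : Measure Ξ' :=
  m'.withDensity (fun ξ' => expNeg (d (ξ, ξ')))

/-- The joint law `T(P)` of a noiseless sample and its noisy observation,
`dT(P)/d(P ⊗ m') = exp(−d)`. -/
def jointLaw {Ξ Ξ' : Type*} [MeasurableSpace Ξ] [MeasurableSpace Ξ'] (d : Ξ × Ξ' → EReal)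
    (m' : Measure Ξ') (P : Measure Ξ) : Measure (Ξ × Ξ') :=
  (P.prod m').withDensity (fun p => expNeg (d p))

/-- The empirical probability measure of the first `N` observations
(with a junk Dirac value at `N = 0`). -/
def empPM {α : Type*} [MeasurableSpace α] (x : ℕ → α) (N : ℕ) : ProbabilityMeasure α :=
  if h : N = 0 then ⟨Measure.dirac (x 0), Measure.dirac.isProbabilityMeasure⟩
  else
    ⟨(N : ℝ≥0∞)⁻¹ • ∑ i ∈ Finset.range N, Measure.dirac (x i), by
      constructor
      simp only [Measure.smul_apply, Measure.coe_finset_sum, Finset.sum_apply,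
        MeasureTheory.measure_univ, Finset.sum_const, Finset.card_range, nsmul_eq_mul, mul_one,
        smul_eq_mul]
      exact ENNReal.inv_mul_cancel (by exact_mod_cast h) (by simp)⟩

end

/-- The `δ`-smoothed rate function `I^δ(P', P)`. -/
noncomputable def Ismooth {Ξ Ξ' : Type*} [MeasurableSpace Ξ] [MeasurableSpace Ξ']
    (DM : ProbabilityMeasure Ξ' → ProbabilityMeasure Ξ' → ℝ)
    (d : Ξ × Ξ' → EReal) (m' : Measure Ξ') (δ : ℝ)
    (P' : ProbabilityMeasure Ξ') (P : Measure Ξ) : EReal :=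
  ⨅ P'' ∈ {P'' : ProbabilityMeasure Ξ' | DM P'' P' ≤ δ}, rateI d m' (P'' : Measure Ξ') P

/-- the closure of the strict superlevel set of the smoothed rate function is
contained in the strict superlevel set of the rate function. -/
theorem closure_smooth_superlevel_subset
    {Ξ Ξ' : Type*}
    [MeasurableSpace Ξ] [TopologicalSpace Ξ] [PolishSpace Ξ] [BorelSpace Ξ]
    [MeasurableSpace Ξ'] [TopologicalSpace Ξ'] [PolishSpace Ξ'] [BorelSpace Ξ']
    -- Assumption 1: the observational map has density `exp (−d)` w.r.t. the base measure `m'`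
    (d : Ξ × Ξ' → EReal) (hd_meas : Measurable d) (hd_ne_bot : ∀ p, d p ≠ ⊥)
    (m' : Measure Ξ')
    (hObs : ∀ ξ : Ξ, IsProbabilityMeasure (obsKernel d m' ξ))
    -- `DM` is a metric on `P(Ξ')` compatible with the topology of weak convergence
    (DM : ProbabilityMeasure Ξ' → ProbabilityMeasure Ξ' → ℝ)
    (hDM_self : ∀ Q, DM Q Q = 0)
    (hDM_eq : ∀ Q Q', DM Q Q' = 0 → Q = Q')
    (hDM_symm : ∀ Q Q', DM Q Q' = DM Q' Q)
    (hDM_tri : ∀ Q₁ Q₂ Q₃, DM Q₁ Q₃ ≤ DM Q₁ Q₂ + DM Q₂ Q₃)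
    (hDM_topo : ∀ (Q : ProbabilityMeasure Ξ') (s : Set (ProbabilityMeasure Ξ')),
      s ∈ 𝓝 Q ↔ ∃ ε > 0, {Q' | DM Q' Q < ε} ⊆ s)
    (P : ProbabilityMeasure Ξ) (δ : ℝ) (hδ : 0 < δ) (r : ℝ) (hr : 0 < r) :
    closure {P' : ProbabilityMeasure Ξ' |
        (r : EReal) < Ismooth DM d m' δ P' (P : Measure Ξ)} ⊆
      {P' : ProbabilityMeasure Ξ' |
        (r : EReal) < rateI d m' (P' : Measure Ξ') (P : Measure Ξ)} := by
  intro P' hP'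
  have hball : {Q' | DM Q' P' < δ} ∈ 𝓝 P' :=
    (hDM_topo P' _).mpr ⟨δ, hδ, fun Q hQ => hQ⟩
  obtain ⟨P'', hP''⟩ := mem_closure_iff_nhds.mp hP' _ hball
  have h1 : DM P' P'' ≤ δ := by
    rw [hDM_symm]; exact le_of_lt hP''.1
  have h2 : Ismooth DM d m' δ P'' (P : Measure Ξ) ≤
      rateI d m' (P' : Measure Ξ') (P : Measure Ξ) := iInf₂_le P' h1
  exact lt_of_lt_of_le hP''.2 h2
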